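/- arXiv:2506.03104 — 2 statements merged into one kernel-verified Lean document; each statement's English description precedes it below -/
import Mathlib

section
/- Suppose site-level random variables satisfy θ₁ₖ = γ₁ₖ + γ₂ₖ·β₁ₖ + γ₃ₖ·β₂ₖ + θ_{Vk}·α₁ₖ, where (α₁ₖ, β₁ₖ, β₂ₖ) is jointly independent of (θ_{Vk}, γ₂ₖ, γ₃ₖ) and each of α₁ₖ, β₁ₖ, β₂ₖ is independent of γ₁ₖ. Then E[θ₁ₖ] = E[γ₁ₖ] + E[γ₂ₖ]·E[β₁ₖ] + E[γ₃ₖ]·E[β₂ₖ] + E[θ_{Vk}]·E[α₁ₖ], and consequently the cumulative ATE δ_ATE = E[γ₁ₖ] + E[γ₂ₖ] + E[γ₃ₖ] + E[θ_{Vk}]·E[α₁ₖ] is identified as a linear combination of the identifiable quantities E[θ₁ₖ], E[β₁ₖ], E[β₂ₖ], E[α₁ₖ] together with the coefficients E[γ₂ₖ], E[γ₃ₖ], E[θ_{Vk}]: specifically δ_ATE = E[θ₁ₖ] + E[γ₂ₖ]·(1 − E[β₁ₖ]) + E[γ₃ₖ]·(1 − E[β₂ₖ]). -/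
open MeasureTheory ProbabilityTheory

/-! Each of the three products γ₂β₁, γ₃β₂, θVα₁ pairs a coordinate of the Phase-I vector
(α₁, β₁, β₂) with a coordinate of (θV, γ₂, γ₃), so the joint independence makes every
product factor in expectation; γ₁ enters linearly. The identity for δ_ATE is then linear
algebra. -/

section RandomCoefficientModel

variable {Ω ι : Type*} [MeasurableSpace Ω] {μ : Measure Ω}

lemma integral_add_sum_mul_of_indepFun (s : Finset ι) {a : Ω → ℝ} {X Y : ι → Ω → ℝ}
    (ha : Integrable a μ) (hX : ∀ i ∈ s, Integrable (X i) μ) (hY : ∀ i ∈ s, Integrable (Y i) μ)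
    (hXY : ∀ i ∈ s, IndepFun (X i) (Y i) μ) :
    ∫ ω, a ω + ∑ i ∈ s, X i ω * Y i ω ∂μ
      = (∫ ω, a ω ∂μ) + ∑ i ∈ s, (∫ ω, X i ω ∂μ) * ∫ ω, Y i ω ∂μ := by
  have hprod : ∀ i ∈ s, Integrable (fun ω => X i ω * Y i ω) μ := fun i hi =>
    (hXY i hi).integrable_mul (hX i hi) (hY i hi)
  rw [integral_add ha (integrable_finsetSum s hprod), integral_finsetSum s hprod]
  congr 1
  refine Finset.sum_congr rfl fun i hi => ?_
  exact (hXY i hi).integral_mul_eq_mul_integral (hX i hi).aestronglyMeasurable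
    (hY i hi).aestronglyMeasurable

end RandomCoefficientModel

theorem stmt_12_general {Ω : Type*} [MeasurableSpace Ω] (μ : Measure Ω) [IsProbabilityMeasure μ]
    (θ₁ α₁ β₁ β₂ θV γ₁ γ₂ γ₃ : Ω → ℝ)
    (hα₁ : MemLp α₁ 2 μ) (hβ₁ : MemLp β₁ 2 μ) (hβ₂ : MemLp β₂ 2 μ)
    (hθV : MemLp θV 2 μ) (hγ₁ : MemLp γ₁ 2 μ) (hγ₂ : MemLp γ₂ 2 μ) (hγ₃ : MemLp γ₃ 2 μ)
    (hθ₁ : ∀ ω, θ₁ ω = γ₁ ω + γ₂ ω * β₁ ω + γ₃ ω * β₂ ω + θV ω * α₁ ω)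
    (hindep : IndepFun (fun ω => (α₁ ω, β₁ ω, β₂ ω)) (fun ω => (θV ω, γ₂ ω, γ₃ ω)) μ)
    (δATE : ℝ)
    (hδ : δATE = (∫ ω, γ₁ ω ∂μ) + (∫ ω, γ₂ ω ∂μ) + (∫ ω, γ₃ ω ∂μ)
      + (∫ ω, θV ω ∂μ) * ∫ ω, α₁ ω ∂μ) :
    (∫ ω, θ₁ ω ∂μ = (∫ ω, γ₁ ω ∂μ) + (∫ ω, γ₂ ω ∂μ) * (∫ ω, β₁ ω ∂μ)
        + (∫ ω, γ₃ ω ∂μ) * (∫ ω, β₂ ω ∂μ)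
        + (∫ ω, θV ω ∂μ) * ∫ ω, α₁ ω ∂μ) ∧
      δATE = (∫ ω, θ₁ ω ∂μ) + (∫ ω, γ₂ ω ∂μ) * (1 - ∫ ω, β₁ ω ∂μ)
        + (∫ ω, γ₃ ω ∂μ) * (1 - ∫ ω, β₂ ω ∂μ) := by
  have hfst : Measurable fun p : ℝ × ℝ × ℝ => p.1 := measurable_fst
  have hsnd_fst : Measurable fun p : ℝ × ℝ × ℝ => p.2.1 := measurable_fst.comp measurable_snd
  have hsnd_snd : Measurable fun p : ℝ × ℝ × ℝ => p.2.2 := measurable_snd.comp measurable_snd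
  have hγ₂β₁ : IndepFun γ₂ β₁ μ := (hindep.comp hsnd_fst hsnd_fst).symm
  have hγ₃β₂ : IndepFun γ₃ β₂ μ := (hindep.comp hsnd_snd hsnd_snd).symm
  have hθVα₁ : IndepFun θV α₁ μ := (hindep.comp hfst hfst).symm
  have hmodel := integral_add_sum_mul_of_indepFun Finset.univ (hγ₁.integrable one_le_two)
    (X := ![γ₂, γ₃, θV]) (Y := ![β₁, β₂, α₁])
    (by simp [Fin.forall_fin_succ, hγ₂.integrable one_le_two, hγ₃.integrable one_le_two,
      hθV.integrable one_le_two])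
    (by simp [Fin.forall_fin_succ, hβ₁.integrable one_le_two, hβ₂.integrable one_le_two,
      hα₁.integrable one_le_two])
    (by simp [Fin.forall_fin_succ, hγ₂β₁, hγ₃β₂, hθVα₁])
  simp only [Fin.sum_univ_three, Matrix.cons_val_zero, Matrix.cons_val_one, Matrix.cons_val_two,
    Matrix.tail_cons, Matrix.head_cons, ← add_assoc, ← hθ₁] at hmodel
  exact ⟨hmodel, by rw [hδ, hmodel]; ring⟩

/-- Between-site identification step of the MS2T-IV strategy: under the
between-site independence assumption, E[θ₁ₖ] factors, and the cumulative ATE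
δ_ATE = E[γ₁ₖ] + E[γ₂ₖ] + E[γ₃ₖ] + E[θ_Vk]·E[α₁ₖ] satisfies
δ_ATE = E[θ₁ₖ] + E[γ₂ₖ](1 − E[β₁ₖ]) + E[γ₃ₖ](1 − E[β₂ₖ]). -/
theorem stmt_12 {Ω : Type*} [MeasurableSpace Ω] (μ : Measure Ω) [IsProbabilityMeasure μ]
    (θ₁ α₁ β₁ β₂ θV γ₁ γ₂ γ₃ : Ω → ℝ)
    (hα₁ : MemLp α₁ 2 μ) (hβ₁ : MemLp β₁ 2 μ) (hβ₂ : MemLp β₂ 2 μ)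
    (hθV : MemLp θV 2 μ) (hγ₁ : MemLp γ₁ 2 μ) (hγ₂ : MemLp γ₂ 2 μ) (hγ₃ : MemLp γ₃ 2 μ)
    (hθ₁ : ∀ ω, θ₁ ω = γ₁ ω + γ₂ ω * β₁ ω + γ₃ ω * β₂ ω + θV ω * α₁ ω)
    (hindep : IndepFun (fun ω => (α₁ ω, β₁ ω, β₂ ω)) (fun ω => (θV ω, γ₂ ω, γ₃ ω)) μ)
    (hα₁γ₁ : IndepFun α₁ γ₁ μ) (hβ₁γ₁ : IndepFun β₁ γ₁ μ) (hβ₂γ₁ : IndepFun β₂ γ₁ μ)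
    (δATE : ℝ)
    (hδ : δATE = (∫ ω, γ₁ ω ∂μ) + (∫ ω, γ₂ ω ∂μ) + (∫ ω, γ₃ ω ∂μ)
      + (∫ ω, θV ω ∂μ) * ∫ ω, α₁ ω ∂μ) :
    (∫ ω, θ₁ ω ∂μ = (∫ ω, γ₁ ω ∂μ) + (∫ ω, γ₂ ω ∂μ) * (∫ ω, β₁ ω ∂μ)
        + (∫ ω, γ₃ ω ∂μ) * (∫ ω, β₂ ω ∂μ)
        + (∫ ω, θV ω ∂μ) * ∫ ω, α₁ ω ∂μ) ∧
      δATE = (∫ ω, θ₁ ω ∂μ) + (∫ ω, γ₂ ω ∂μ) * (1 - ∫ ω, β₁ ω ∂μ)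
        + (∫ ω, γ₃ ω ∂μ) * (1 - ∫ ω, β₂ ω ∂μ) :=
  stmt_12_general μ θ₁ α₁ β₁ β₂ θV γ₁ γ₂ γ₃ hα₁ hβ₁ hβ₂ hθV hγ₁ hγ₂ hγ₃ hθ₁ hindep δATE hδ
end

section
/- Let Z ∈ {0,1} be independent of (V(0), V(1), D(0), D(1), θ₀, θ_V, γ₁, γ₂, γ₃), suppose Y(z,d) = θ₀ + θ_V·V(z) + γ₁z + γ₂d + γ₃zd, and let Y = Y(Z, D(Z)) be the observed outcome. If Cov(γ₂, D(1)−D(0)) = 0, Cov(γ₃, D(1)) = 0, Cov(θ_V, V(1)−V(0)) = 0, and additionally E[D(1)−D(0)] = 1 and E[D(1)] = 1 and there is no direct or indirect Phase I effect (E[γ₁] = 0 and either E[θ_V] = 0 or E[V(1)−V(0)] = 0), then E[Y | Z=1] − E[Y | Z=0] = E[γ₂] + E[γ₃] = δ_ATE − E[γ₁] − E[θ_V]E[V(1)−V(0)] = δ_ATE, i.e., the standard ITT (or IV with full compliance) analysis recovers the cumulative ATE exactly when compliance is perfect and the Phase I exposure has no direct or V-mediated effect. -/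
/-!
Because `Z` is independent of the potential outcomes, the mean of the observed outcome on
`{Z = z}` is the unconditional mean of `Y(z, D(z))`, with which `Y` agrees there. The ITT
contrast is therefore `E[Y(1, D(1)) - Y(0, D(0))] = E[θ_V (V(1) - V(0))] + E[γ₁]
+ E[γ₂ (D(1) - D(0))] + E[γ₃ D(1)]`, which the zero-covariance, compliance and no-Phase-I-effect
hypotheses reduce to `E[γ₂] + E[γ₃]`; they reduce `δ_ATE` to the same value.
-/

open MeasureTheory ProbabilityTheory

namespace ProbabilityTheory.IndepFun

variable {Ω β : Type*} [MeasurableSpace Ω] [MeasurableSpace β] {μ : Measure Ω}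
  {Z : Ω → β} {X Y : Ω → ℝ}

theorem setIntegral_preimage_eq_mul (hZX : IndepFun Z X μ) (hZ : Measurable Z) {s : Set β}
    (hs : MeasurableSet s) (hX : AEMeasurable X μ) :
    ∫ ω in Z ⁻¹' s, X ω ∂μ = μ.real (Z ⁻¹' s) * ∫ ω, X ω ∂μ :=
  Indep.setIntegral_eq_mul (f := id) hZ.comap_le ((IndepFun_iff_Indep Z X μ).1 hZX) hX
    ⟨s, hs, rfl⟩ aestronglyMeasurable_id

theorem setIntegral_div_measure_eq_integral [MeasurableSingletonClass β] {b : β}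
    (hZX : IndepFun Z X μ) (hZ : Measurable Z) (hX : AEMeasurable X μ)
    (hpos : (μ {ω | Z ω = b}).toReal ≠ 0) (hYX : ∀ ω, Z ω = b → Y ω = X ω) :
    (∫ ω in {ω | Z ω = b}, Y ω ∂μ) / (μ {ω | Z ω = b}).toReal = ∫ ω, X ω ∂μ := by
  change μ.real (Z ⁻¹' {b}) ≠ 0 at hpos
  change (∫ ω in Z ⁻¹' {b}, Y ω ∂μ) / μ.real (Z ⁻¹' {b}) = _
  rw [setIntegral_congr_fun (hZ (measurableSet_singleton b)) hYX,
    hZX.setIntegral_preimage_eq_mul hZ (measurableSet_singleton b) hX,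
    mul_div_cancel_left₀ _ hpos]

end ProbabilityTheory.IndepFun

theorem MeasureTheory.Integrable.mul_of_eq_zero_or_one {Ω : Type*} [MeasurableSpace Ω]
    {μ : Measure Ω} {Z g : Ω → ℝ} (hg : Integrable g μ) (hZ : Measurable Z)
    (hZ01 : ∀ ω, Z ω = 0 ∨ Z ω = 1) : Integrable (fun ω => Z ω * g ω) μ :=
  hg.bdd_mul hZ.aestronglyMeasurable (c := 1) <| .of_forall fun ω => by
    rcases hZ01 ω with h | h <;> simp [h]

theorem probReal_setOf_eq_zero_of_eq_zero_or_one {Ω : Type*} [MeasurableSpace Ω]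
    {μ : Measure Ω} [IsProbabilityMeasure μ] {Z : Ω → ℝ} (hZ : Measurable Z)
    (hZ01 : ∀ ω, Z ω = 0 ∨ Z ω = 1) : μ.real {ω | Z ω = 0} = 1 - μ.real {ω | Z ω = 1} := by
  have hcompl : {ω | Z ω = 0} = {ω | Z ω = 1}ᶜ := by
    ext ω; rcases hZ01 ω with h | h <;> simp [h]
  rw [hcompl, probReal_compl_eq_one_sub (measurableSet_eq_fun hZ measurable_const)]

theorem stmt_18_general {Ω : Type*} [MeasurableSpace Ω] (μ : Measure Ω) [IsProbabilityMeasure μ]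
    (Z V0 V1 D0 D1 θ₀ θV γ₁ γ₂ γ₃ : Ω → ℝ)
    (hZ01 : ∀ ω, Z ω = 0 ∨ Z ω = 1)
    (hZmeas : Measurable Z)
    (hp : 0 < (μ {ω | Z ω = 1}).toReal ∧ (μ {ω | Z ω = 1}).toReal < 1)
    -- Z independent of all potential outcomes and coefficients
    (hindep : IndepFun Z
      (fun ω => (V0 ω, V1 ω, D0 ω, D1 ω, θ₀ ω, θV ω, γ₁ ω, γ₂ ω, γ₃ ω)) μ)
    -- structural model and observed outcome Y = Y(Z, D(Z))
    (D Y : Ω → ℝ)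
    (hD : ∀ ω, D ω = Z ω * D1 ω + (1 - Z ω) * D0 ω)
    (hYdef : ∀ ω, Y ω = θ₀ ω + θV ω * (Z ω * V1 ω + (1 - Z ω) * V0 ω)
      + γ₁ ω * Z ω + γ₂ ω * D ω + γ₃ ω * Z ω * D ω)
    -- integrability
    (hYint : Integrable Y μ)
    (hγ₁ : Integrable γ₁ μ)
    (hpV : Integrable (fun ω => θV ω * (V1 ω - V0 ω)) μ)
    (hp2 : Integrable (fun ω => γ₂ ω * (D1 ω - D0 ω)) μ)
    (hp3 : Integrable (fun ω => γ₃ ω * D1 ω) μ)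
    -- within-site zero covariance conditions
    (hcov2 : ∫ ω, γ₂ ω * (D1 ω - D0 ω) ∂μ =
      (∫ ω, γ₂ ω ∂μ) * ∫ ω, (D1 ω - D0 ω) ∂μ)
    (hcov3 : ∫ ω, γ₃ ω * D1 ω ∂μ = (∫ ω, γ₃ ω ∂μ) * ∫ ω, D1 ω ∂μ)
    (hcovV : ∫ ω, θV ω * (V1 ω - V0 ω) ∂μ =
      (∫ ω, θV ω ∂μ) * ∫ ω, (V1 ω - V0 ω) ∂μ)
    -- full compliance in expectation and no direct or indirect Phase I effect
    (hfull1 : ∫ ω, (D1 ω - D0 ω) ∂μ = 1)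
    (hfull2 : ∫ ω, D1 ω ∂μ = 1)
    (hγ₁0 : ∫ ω, γ₁ ω ∂μ = 0)
    (hnoind : (∫ ω, θV ω ∂μ = 0) ∨ (∫ ω, (V1 ω - V0 ω) ∂μ = 0))
    (δATE : ℝ)
    (hδ : δATE = (∫ ω, γ₁ ω ∂μ) + (∫ ω, γ₂ ω ∂μ) + (∫ ω, γ₃ ω ∂μ)
      + (∫ ω, θV ω ∂μ) * ∫ ω, (V1 ω - V0 ω) ∂μ) :
    (∫ ω in {ω | Z ω = 1}, Y ω ∂μ) / (μ {ω | Z ω = 1}).toReal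
        - (∫ ω in {ω | Z ω = 0}, Y ω ∂μ) / (μ {ω | Z ω = 0}).toReal
      = (∫ ω, γ₂ ω ∂μ) + (∫ ω, γ₃ ω ∂μ) ∧
      (∫ ω, γ₂ ω ∂μ) + (∫ ω, γ₃ ω ∂μ) = δATE := by
  -- `Y₀ = Y(0, D(0))` and `Y₀ + τ = Y(1, D(1))`
  set Y₀ : Ω → ℝ := fun ω => θ₀ ω + θV ω * V0 ω + γ₂ ω * D0 ω
  set τ : Ω → ℝ := fun ω => θV ω * (V1 ω - V0 ω) + γ₁ ω + γ₂ ω * (D1 ω - D0 ω) + γ₃ ω * D1 ω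
  have hY : ∀ ω, Y ω = Y₀ ω + Z ω * τ ω := fun ω => by
    rcases hZ01 ω with h | h <;> simp only [hYdef, hD, Y₀, τ, h] <;> ring
  have hZY₀ : IndepFun Z Y₀ μ := (hindep.comp measurable_id
    (ψ := fun ((v0, _, d0, _, t0, tv, _, g2, _) : ℝ × ℝ × ℝ × ℝ × ℝ × ℝ × ℝ × ℝ × ℝ) =>
      t0 + tv * v0 + g2 * d0) (by fun_prop) :)
  have hZY₁ : IndepFun Z (fun ω => Y₀ ω + τ ω) μ := (hindep.comp measurable_id
    (ψ := fun ((v0, v1, d0, d1, t0, tv, g1, g2, g3) : ℝ × ℝ × ℝ × ℝ × ℝ × ℝ × ℝ × ℝ × ℝ) =>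
      t0 + tv * v0 + g2 * d0 + (tv * (v1 - v0) + g1 + g2 * (d1 - d0) + g3 * d1)) (by fun_prop) :)
  have hτ : Integrable τ μ := ((hpV.fun_add hγ₁).fun_add hp2).fun_add hp3
  have hY₀ : Integrable Y₀ μ :=
    (hYint.sub (hτ.mul_of_eq_zero_or_one hZmeas hZ01)).congr
      (.of_forall fun ω => by simp [hY ω])
  have hVmed : (∫ ω, θV ω ∂μ) * ∫ ω, (V1 ω - V0 ω) ∂μ = 0 := by
    rcases hnoind with h | h <;> simp [h]
  have hEτ : ∫ ω, τ ω ∂μ = (∫ ω, γ₂ ω ∂μ) + ∫ ω, γ₃ ω ∂μ := by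
    rw [integral_add ((hpV.fun_add hγ₁).fun_add hp2) hp3, integral_add (hpV.fun_add hγ₁) hp2,
      integral_add hpV hγ₁, hcovV, hcov2, hcov3, hfull1, hfull2, hγ₁0, hVmed]
    ring
  have hp0 : μ.real {ω | Z ω = 0} ≠ 0 := by
    rw [probReal_setOf_eq_zero_of_eq_zero_or_one hZmeas hZ01]
    exact sub_ne_zero.2 hp.2.ne'
  refine ⟨?_, by rw [hδ, hγ₁0, hVmed]; ring⟩
  rw [hZY₁.setIntegral_div_measure_eq_integral hZmeas (hY₀.add hτ).aemeasurable hp.1.ne'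
      fun ω h => by simp [hY ω, h],
    hZY₀.setIntegral_div_measure_eq_integral hZmeas hY₀.aemeasurable hp0
      fun ω h => by simp [hY ω, h],
    integral_add hY₀ hτ, hEτ]
  ring

/-- Exactly when compliance is perfect and the Phase I exposure has no direct or
V-mediated effect, the naive ITT analysis recovers the cumulative ATE:
E[Y | Z=1] − E[Y | Z=0] = E[γ₂] + E[γ₃] = δ_ATE. -/
theorem stmt_18 {Ω : Type*} [MeasurableSpace Ω] (μ : Measure Ω) [IsProbabilityMeasure μ]
    (Z V0 V1 D0 D1 θ₀ θV γ₁ γ₂ γ₃ : Ω → ℝ)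
    (hZ01 : ∀ ω, Z ω = 0 ∨ Z ω = 1)
    (hZmeas : Measurable Z)
    (hp : 0 < (μ {ω | Z ω = 1}).toReal ∧ (μ {ω | Z ω = 1}).toReal < 1)
    -- Z independent of all potential outcomes and coefficients
    (hindep : IndepFun Z
      (fun ω => (V0 ω, V1 ω, D0 ω, D1 ω, θ₀ ω, θV ω, γ₁ ω, γ₂ ω, γ₃ ω)) μ)
    -- structural model and observed outcome Y = Y(Z, D(Z))
    (D Y : Ω → ℝ)
    (hD : ∀ ω, D ω = Z ω * D1 ω + (1 - Z ω) * D0 ω)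
    (hYdef : ∀ ω, Y ω = θ₀ ω + θV ω * (Z ω * V1 ω + (1 - Z ω) * V0 ω)
      + γ₁ ω * Z ω + γ₂ ω * D ω + γ₃ ω * Z ω * D ω)
    -- integrability
    (hYint : Integrable Y μ)
    (hθ₀ : Integrable θ₀ μ) (hθV : Integrable θV μ) (hγ₁ : Integrable γ₁ μ)
    (hγ₂ : Integrable γ₂ μ) (hγ₃ : Integrable γ₃ μ)
    (hVd : Integrable (fun ω => V1 ω - V0 ω) μ)
    (hDd : Integrable (fun ω => D1 ω - D0 ω) μ) (hD1int : Integrable D1 μ)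
    (hpV : Integrable (fun ω => θV ω * (V1 ω - V0 ω)) μ)
    (hp2 : Integrable (fun ω => γ₂ ω * (D1 ω - D0 ω)) μ)
    (hp3 : Integrable (fun ω => γ₃ ω * D1 ω) μ)
    -- within-site zero covariance conditions
    (hcov2 : ∫ ω, γ₂ ω * (D1 ω - D0 ω) ∂μ =
      (∫ ω, γ₂ ω ∂μ) * ∫ ω, (D1 ω - D0 ω) ∂μ)
    (hcov3 : ∫ ω, γ₃ ω * D1 ω ∂μ = (∫ ω, γ₃ ω ∂μ) * ∫ ω, D1 ω ∂μ)
    (hcovV : ∫ ω, θV ω * (V1 ω - V0 ω) ∂μ =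
      (∫ ω, θV ω ∂μ) * ∫ ω, (V1 ω - V0 ω) ∂μ)
    -- full compliance in expectation and no direct or indirect Phase I effect
    (hfull1 : ∫ ω, (D1 ω - D0 ω) ∂μ = 1)
    (hfull2 : ∫ ω, D1 ω ∂μ = 1)
    (hγ₁0 : ∫ ω, γ₁ ω ∂μ = 0)
    (hnoind : (∫ ω, θV ω ∂μ = 0) ∨ (∫ ω, (V1 ω - V0 ω) ∂μ = 0))
    (δATE : ℝ)
    (hδ : δATE = (∫ ω, γ₁ ω ∂μ) + (∫ ω, γ₂ ω ∂μ) + (∫ ω, γ₃ ω ∂μ)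
      + (∫ ω, θV ω ∂μ) * ∫ ω, (V1 ω - V0 ω) ∂μ) :
    (∫ ω in {ω | Z ω = 1}, Y ω ∂μ) / (μ {ω | Z ω = 1}).toReal
        - (∫ ω in {ω | Z ω = 0}, Y ω ∂μ) / (μ {ω | Z ω = 0}).toReal
      = (∫ ω, γ₂ ω ∂μ) + (∫ ω, γ₃ ω ∂μ) ∧
      (∫ ω, γ₂ ω ∂μ) + (∫ ω, γ₃ ω ∂μ) = δATE :=
  stmt_18_general μ Z V0 V1 D0 D1 θ₀ θV γ₁ γ₂ γ₃ hZ01 hZmeas hp hindep D Y hD hYdef hYint hγ₁ hpV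
    hp2 hp3 hcov2 hcov3 hcovV hfull1 hfull2 hγ₁0 hnoind δATE hδ
end
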